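/- In the deterministic saddle point setup below, with constant step-size ε = 1/√T, suppose additionally that F is L_f-Lipschitz and that ‖x‖ ≤ R for all x ∈ X. Then the accumulated constraint violation satisfies Σ_{e=1}^M max(0, Σ_{t=1}^T H_e(x_t)) ≤ √M · ( 2√T (δ + 1) ( (√T/2)(‖x_1 − x*‖² + K) + 2 T L_f R ) )^{1/2}. In particular the time aggregation of the constraint violation grows as O(T^{3/4}). -/

import Mathlib

/-!
For every multiplier `ls ≥ 0`, one projected primal–dual step gives
`2ε (L(x_t, ls) - F x*) ≤ Φ_t - Φ_{t+1} + ε²K` with `Φ_t = ‖x_t - x*‖² + ‖λ_t - ls‖²`: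
expand the two nonexpansive projections, then use convexity of `L` in `x`, concavity in `λ`,
and feasibility of `x*`, whose value `L(x*, λ_t) ≤ F x* - (δε/2)‖λ_t‖²` absorbs the
`δ‖λ_t‖²` part of the gradient bound. Telescoping over `t ≤ T` and taking `ls = c [S]₊`, where
`S_e = ∑_t H_e(x_t)`, the coefficient of `‖[S]₊‖²` is `2εc - (δ + 1)c²`, maximal at
`c = ε / (δ + 1)`; the objective gap costs at most `2 T L_f R` by Lipschitz continuity. This
bounds `‖[S]₊‖²` by `T(δ + 1)(‖x_1 - x*‖² + K + 4√T L_f R)`, and Cauchy–Schwarz passes from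
`‖[S]₊‖` to `∑_e [S_e]₊` at the price of `√M`.
-/

open Finset
open scoped RealInnerProductSpace

section InnerProductSpace

variable {E : Type*} [NormedAddCommGroup E] [InnerProductSpace ℝ E]

theorem Convex.norm_sub_le_of_forall_norm_sub_le {K : Set E} (hK : Convex ℝ K) {y p w : E}
    (hp : p ∈ K) (hw : w ∈ K) (hmin : ∀ z ∈ K, ‖y - p‖ ≤ ‖y - z‖) : ‖p - w‖ ≤ ‖y - w‖ := by
  have : Nonempty K := ⟨⟨p, hp⟩⟩
  have hinf : ‖y - p‖ = ⨅ z : K, ‖y - z‖ :=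
    le_antisymm (le_ciInf fun z => hmin z z.2)
      (ciInf_le (f := fun z : K => ‖y - z‖) ⟨0, Set.forall_mem_range.2 fun _ => norm_nonneg _⟩
        ⟨p, hp⟩)
  have hobtuse := (norm_eq_iInf_iff_real_inner_le_zero hK hp).1 hinf w hw
  have hexpand : ‖y - w‖ ^ 2 = ‖y - p‖ ^ 2 - 2 * ⟪y - p, w - p⟫ + ‖w - p‖ ^ 2 := by
    rw [← norm_sub_sq_real, sub_sub_sub_cancel_right]
  rw [norm_sub_rev p w, ← sq_le_sq₀ (norm_nonneg _) (norm_nonneg _)]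
  linarith [sq_nonneg ‖y - p‖]

theorem norm_sub_sq_le_of_norm_le_norm_add_smul {p y w d : E} {ε : ℝ}
    (h : ‖p - w‖ ≤ ‖y + ε • d - w‖) :
    ‖p - w‖ ^ 2 ≤ ‖y - w‖ ^ 2 + 2 * ε * ⟪d, y - w⟫ + ε ^ 2 * ‖d‖ ^ 2 := by
  have hexpand : ‖y + ε • d - w‖ ^ 2 = ‖y - w‖ ^ 2 + 2 * ε * ⟪d, y - w⟫ + ε ^ 2 * ‖d‖ ^ 2 := by
    rw [add_sub_right_comm, norm_add_sq_real, real_inner_smul_right, norm_smul, mul_pow,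
      Real.norm_eq_abs, sq_abs, real_inner_comm]
    ring
  exact hexpand ▸ pow_le_pow_left₀ (norm_nonneg _) h 2

theorem ConvexOn.inner_sub_le_sub_of_hasGradientAt [CompleteSpace E] {f : E → ℝ}
    (hf : ConvexOn ℝ Set.univ f) {p G : E} (hG : HasGradientAt f G p) (q : E) :
    ⟪G, q - p⟫ ≤ f q - f p := by
  let line : ℝ →ᵃ[ℝ] E := AffineMap.lineMap p q
  have hderiv : HasDerivAt (f ∘ line) ⟪G, q - p⟫ 0 := by
    have hG' : HasFDerivAt f (InnerProductSpace.toDual ℝ E G) (line 0) := by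
      simpa [line] using hG.hasFDerivAt
    exact hG'.comp_hasDerivAt 0 AffineMap.hasDerivAt_lineMap
  have hslope := (hf.comp_affineMap line).le_slope_of_hasDerivAt (Set.mem_univ 0)
    (Set.mem_univ 1) one_pos hderiv
  simpa [slope_def_field, line] using hslope

end InnerProductSpace

theorem ConvexOn.fun_sum {E : Type*} [AddCommGroup E] [Module ℝ E] {ι : Type*} {s : Finset ι}
    {f : ι → E → ℝ} (h : ∀ i ∈ s, ConvexOn ℝ Set.univ (f i)) :
    ConvexOn ℝ Set.univ (fun y => ∑ i ∈ s, f i y) := by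
  classical
  induction s using Finset.induction_on with
  | empty => simpa using convexOn_const (0 : ℝ) convex_univ
  | insert i s hi ih =>
    simp_rw [sum_insert hi]
    exact (h i (mem_insert_self i s)).add (ih fun j hj => h j (mem_insert_of_mem hj))

theorem norm_sub_le_of_eq_max_zero {ι : Type*} [Fintype ι] {v w l : EuclideanSpace ℝ ι}
    (hw : ∀ i, w i = max (v i) 0) (hl : ∀ i, 0 ≤ l i) : ‖w - l‖ ≤ ‖v - l‖ := by
  rw [← sq_le_sq₀ (norm_nonneg _) (norm_nonneg _), EuclideanSpace.real_norm_sq_eq,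
    EuclideanSpace.real_norm_sq_eq]
  refine sum_le_sum fun i _ => ?_
  have h := abs_max_sub_max_le_abs (v i) (l i) 0
  rw [max_eq_left (hl i), ← hw i] at h
  simpa using sq_le_sq.2 h

theorem sum_le_sqrt_card_mul_norm {ι : Type*} [Fintype ι] (v : EuclideanSpace ℝ ι) :
    ∑ i, v i ≤ √(Fintype.card ι) * ‖v‖ := by
  have h := real_inner_le_norm (WithLp.toLp 2 fun _ => (1 : ℝ)) v
  simpa [EuclideanSpace.norm_eq, PiLp.inner_apply] using h

theorem sum_Icc_le_of_le_sub_succ {a c : ℕ → ℝ} {d : ℝ} {T : ℕ}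
    (h : ∀ t ∈ Icc 1 T, c t ≤ a t - a (t + 1) + d) :
    ∑ t ∈ Icc 1 T, c t ≤ a 1 - a (T + 1) + T * d := by
  induction T with
  | zero => simp
  | succ T ih =>
    rw [sum_Icc_succ_top (by omega)]
    have hT := h (T + 1) (by simp)
    have := ih fun t ht => h t (by simp at ht ⊢; omega)
    push_cast
    linarith

theorem forall_of_succ_of_one {p : ℕ → Prop} {T : ℕ} (h1 : p 1)
    (hsucc : ∀ t, 1 ≤ t → t ≤ T → p (t + 1)) : ∀ t, 1 ≤ t → t ≤ T + 1 → p t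
  | 0, h, _ => absurd h (by omega)
  | 1, _, _ => h1
  | t + 2, _, hT => hsucc (t + 1) (by omega) (by omega)

theorem sum_mul_eq_norm_sq_of_eq_max_zero {ι : Type*} [Fintype ι] {v : EuclideanSpace ℝ ι}
    {S : ι → ℝ} (hv : ∀ e, v e = max 0 (S e)) : ∑ e, v e * S e = ‖v‖ ^ 2 := by
  rw [EuclideanSpace.real_norm_sq_eq]
  refine sum_congr rfl fun e _ => ?_
  rcases le_total 0 (S e) with h | h <;> simp [hv, h, sq]

theorem sum_sub_le_of_abs_sub_le_mul_norm {E : Type*} [SeminormedAddCommGroup E] {F : E → ℝ}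
    {Lf R : ℝ} (hLf0 : 0 ≤ Lf) (hLf : ∀ y z, |F y - F z| ≤ Lf * ‖y - z‖) {α : Type*}
    {s : Finset α} {x : α → E} {xs : E} (hxs : ‖xs‖ ≤ R) (hx : ∀ t ∈ s, ‖x t‖ ≤ R) :
    ∑ t ∈ s, (F xs - F (x t)) ≤ s.card * (2 * Lf * R) := by
  have hpoint : ∀ t ∈ s, F xs - F (x t) ≤ 2 * Lf * R := fun t ht => calc
    F xs - F (x t) ≤ Lf * ‖xs - x t‖ := (le_abs_self _).trans (hLf _ _)
    _ ≤ Lf * (R + R) := by gcongr; exact (norm_sub_le _ _).trans (add_le_add hxs (hx t ht))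
    _ = 2 * Lf * R := by ring
  simpa using sum_le_sum hpoint

theorem subsingleton_of_abs_sub_le_mul_norm {E : Type*} [NormedAddCommGroup E] {F : E → ℝ}
    {Lf : ℝ} (hLf : Lf < 0) (h : ∀ y z, |F y - F z| ≤ Lf * ‖y - z‖) : Subsingleton E := by
  refine ⟨fun y z => ?_⟩
  have := (abs_nonneg _).trans (h y z)
  rw [← sub_eq_zero, ← norm_eq_zero]
  nlinarith [norm_nonneg (y - z)]

section AugmentedLagrangian

variable {E : Type*} {ι : Type*} [Fintype ι] {F : E → ℝ} {H : ι → E → ℝ}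

/-- The paper's `L(y, l)`, with `ρ = δε`. -/
noncomputable def augLagrangian (F : E → ℝ) (H : ι → E → ℝ) (ρ : ℝ) (l : EuclideanSpace ℝ ι)
    (y : E) : ℝ :=
  F y + (∑ e, l e * H e y) - (ρ / 2) * ‖l‖ ^ 2

theorem convexOn_augLagrangian [AddCommGroup E] [Module ℝ E] (hF : ConvexOn ℝ Set.univ F)
    (hH : ∀ e, ConvexOn ℝ Set.univ (H e)) (ρ : ℝ) {l : EuclideanSpace ℝ ι} (hl : ∀ e, 0 ≤ l e) :
    ConvexOn ℝ Set.univ (augLagrangian F H ρ l) := by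
  have hsum : ConvexOn ℝ Set.univ (fun y => ∑ e, l e * H e y) :=
    ConvexOn.fun_sum fun e _ => (hH e).smul (hl e)
  exact (hF.add hsum).sub (concaveOn_const _ convex_univ)

theorem differentiable_augLagrangian [NormedAddCommGroup E] [NormedSpace ℝ E]
    (hF : Differentiable ℝ F) (hH : ∀ e, Differentiable ℝ (H e)) (ρ : ℝ)
    (l : EuclideanSpace ℝ ι) : Differentiable ℝ (augLagrangian F H ρ l) := by
  have hsum : Differentiable ℝ (fun y => ∑ e, l e * H e y) :=
    Differentiable.fun_sum fun e _ => (hH e).const_mul (l e)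
  exact (hF.add hsum).sub_const _

theorem augLagrangian_le_add_inner {ρ : ℝ} (hρ : 0 ≤ ρ) (y : E) {l ls gl : EuclideanSpace ℝ ι}
    (hgl : ∀ e, gl e = H e y - ρ * l e) :
    augLagrangian F H ρ ls y ≤ augLagrangian F H ρ l y + ⟪gl, ls - l⟫ := by
  have hgap : augLagrangian F H ρ l y + ⟪gl, ls - l⟫ - augLagrangian F H ρ ls y
      = ∑ e, ρ / 2 * (ls e - l e) ^ 2 := by
    simp only [augLagrangian, EuclideanSpace.real_norm_sq_eq, PiLp.inner_apply, PiLp.sub_apply,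
      RCLike.inner_apply, conj_trivial, mul_sum, hgl]
    rw [← sum_congr rfl fun e _ => (by ring : l e * H e y - ρ / 2 * l e ^ 2
      + (ls e - l e) * (H e y - ρ * l e) - (ls e * H e y - ρ / 2 * ls e ^ 2)
        = ρ / 2 * (ls e - l e) ^ 2)]
    simp only [sum_add_distrib, sum_sub_distrib]
    ring
  have : 0 ≤ ∑ e, ρ / 2 * (ls e - l e) ^ 2 := sum_nonneg fun e _ => by positivity
  linarith

theorem augLagrangian_add_le {ρ : ℝ} {y : E} {l : EuclideanSpace ℝ ι} (hl : ∀ e, 0 ≤ l e)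
    (hy : ∀ e, H e y ≤ 0) : augLagrangian F H ρ l y + ρ / 2 * ‖l‖ ^ 2 ≤ F y := by
  have : ∑ e, l e * H e y ≤ 0 := sum_nonpos fun e _ => mul_nonpos_of_nonneg_of_nonpos (hl e) (hy e)
  simp only [augLagrangian]
  linarith

theorem sum_augLagrangian (F : E → ℝ) (H : ι → E → ℝ) (ρ : ℝ) (l : EuclideanSpace ℝ ι)
    {α : Type*} (x : α → E) (s : Finset α) :
    ∑ t ∈ s, augLagrangian F H ρ l (x t)
      = ∑ t ∈ s, F (x t) + ∑ e, l e * ∑ t ∈ s, H e (x t) - s.card * (ρ / 2 * ‖l‖ ^ 2) := by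
  simp only [augLagrangian, sum_add_distrib, sum_sub_distrib, mul_sum, sum_const, nsmul_eq_mul]
  rw [sum_comm]

variable [NormedAddCommGroup E] [InnerProductSpace ℝ E] [CompleteSpace E]

theorem augLagrangian_step (hF : ConvexOn ℝ Set.univ F) (hH : ∀ e, ConvexOn ℝ Set.univ (H e))
    {ε δ : ℝ} (hε : 0 ≤ ε) (hδ : 0 ≤ δ) {x x' xs g : E} {l l' ls gl : EuclideanSpace ℝ ι}
    (hl : ∀ e, 0 ≤ l e) (hg : HasGradientAt (augLagrangian F H (δ * ε) l) g x)
    (hgl : ∀ e, gl e = H e x - δ * ε * l e)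
    (hx' : ‖x' - xs‖ ≤ ‖x - ε • g - xs‖) (hl' : ‖l' - ls‖ ≤ ‖l + ε • gl - ls‖)
    (hxs : ∀ e, H e xs ≤ 0) :
    2 * ε * (augLagrangian F H (δ * ε) ls x - F xs)
      ≤ ‖x - xs‖ ^ 2 - ‖x' - xs‖ ^ 2 + (‖l - ls‖ ^ 2 - ‖l' - ls‖ ^ 2)
        + ε ^ 2 * (‖g‖ ^ 2 + ‖gl‖ ^ 2 - δ * ‖l‖ ^ 2) := by
  have hprimal := norm_sub_sq_le_of_norm_le_norm_add_smul
    (by rwa [smul_neg, ← sub_eq_add_neg] : ‖x' - xs‖ ≤ ‖x + ε • -g - xs‖)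
  rw [inner_neg_left, norm_neg] at hprimal
  have hdual := norm_sub_sq_le_of_norm_le_norm_add_smul hl'
  have hconvex := (convexOn_augLagrangian hF hH (δ * ε) hl).inner_sub_le_sub_of_hasGradientAt hg xs
  have hconcave := augLagrangian_le_add_inner (F := F) (mul_nonneg hδ hε) x hgl (ls := ls)
  have hfeas := augLagrangian_add_le (ρ := δ * ε) (F := F) hl hxs
  rw [inner_sub_right] at hconvex hprimal hconcave hdual
  have key : augLagrangian F H (δ * ε) ls x - F xs
      ≤ ⟪g, x⟫ - ⟪g, xs⟫ - (⟪gl, l⟫ - ⟪gl, ls⟫) - δ * ε / 2 * ‖l‖ ^ 2 := by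
    linarith
  linarith [mul_le_mul_of_nonneg_left key (by positivity : (0 : ℝ) ≤ 2 * ε)]

end AugmentedLagrangian

section Trajectory

variable {E : Type*} [NormedAddCommGroup E] [InnerProductSpace ℝ E] [CompleteSpace E]
  {ι : Type*} [Fintype ι] {F : E → ℝ} {H : ι → E → ℝ}

theorem sum_augLagrangian_sub_le {X : Set E} (hX : Convex ℝ X) {P : E → E}
    (hP : ∀ y, P y ∈ X ∧ ∀ w ∈ X, ‖y - P y‖ ≤ ‖y - w‖)
    (hFconv : ConvexOn ℝ Set.univ F) (hFdiff : Differentiable ℝ F)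
    (hHconv : ∀ e, ConvexOn ℝ Set.univ (H e)) (hHdiff : ∀ e, Differentiable ℝ (H e))
    {ε δ K : ℝ} (hε : 0 ≤ ε) (hδ : 0 ≤ δ) {T : ℕ} {x gx : ℕ → E}
    {lam glam : ℕ → EuclideanSpace ℝ ι} (hlam1 : ∀ e, 0 ≤ lam 1 e)
    (hgx : ∀ t, gx t = gradient (augLagrangian F H (δ * ε) (lam t)) (x t))
    (hglam : ∀ t e, glam t e = H e (x t) - δ * ε * lam t e)
    (hxrec : ∀ t, 1 ≤ t → t ≤ T → x (t + 1) = P (x t - ε • gx t))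
    (hlamrec : ∀ t, 1 ≤ t → t ≤ T → ∀ e, lam (t + 1) e = max ((lam t + ε • glam t) e) 0)
    (hbound : ∀ t, 1 ≤ t → t ≤ T → ‖gx t‖ ^ 2 + ‖glam t‖ ^ 2 ≤ K + δ * ‖lam t‖ ^ 2)
    {xs : E} (hxs : xs ∈ X) (hxs_feas : ∀ e, H e xs ≤ 0) {ls : EuclideanSpace ℝ ι}
    (hls : ∀ e, 0 ≤ ls e) :
    ∑ t ∈ Icc 1 T, 2 * ε * (augLagrangian F H (δ * ε) ls (x t) - F xs)
      ≤ ‖x 1 - xs‖ ^ 2 + ‖lam 1 - ls‖ ^ 2 + T * (ε ^ 2 * K) := by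
  have hlam : ∀ t, 1 ≤ t → t ≤ T + 1 → ∀ e, 0 ≤ lam t e :=
    forall_of_succ_of_one hlam1 fun t ht hT e => (hlamrec t ht hT e).symm ▸ le_max_right _ _
  let potential (t : ℕ) : ℝ := ‖x t - xs‖ ^ 2 + ‖lam t - ls‖ ^ 2
  have hstep : ∀ t ∈ Icc 1 T, 2 * ε * (augLagrangian F H (δ * ε) ls (x t) - F xs)
      ≤ potential t - potential (t + 1) + ε ^ 2 * K := by
    intro t ht
    obtain ⟨ht1, htT⟩ := mem_Icc.1 ht
    have hgrad : HasGradientAt (augLagrangian F H (δ * ε) (lam t)) (gx t) (x t) :=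
      hgx t ▸ (differentiable_augLagrangian hFdiff hHdiff _ _ _).hasGradientAt
    have hdescent := augLagrangian_step hFconv hHconv hε hδ (hlam t ht1 (by omega)) hgrad (hglam t)
      (hxrec t ht1 htT ▸ hX.norm_sub_le_of_forall_norm_sub_le (hP _).1 hxs (hP _).2)
      (norm_sub_le_of_eq_max_zero (hlamrec t ht1 htT) hls) hxs_feas
    have hgrad_bound := mul_le_mul_of_nonneg_left (hbound t ht1 htT) (sq_nonneg ε)
    simp only [potential]
    linarith
  have hsum := sum_Icc_le_of_le_sub_succ hstep
  have : 0 ≤ potential (T + 1) := by positivity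
  simp only [potential] at hsum this
  linarith

end Trajectory

theorem norm_sq_le_of_sum_augLagrangian_smul_le {E : Type*} {ι : Type*} [Fintype ι] {F : E → ℝ}
    {H : ι → E → ℝ} {x : ℕ → E} {xs : E} {T : ℕ} {ε δ K D B : ℝ} (hε : 0 < ε)
    (hTε : T * ε ^ 2 = 1) (hδ : 0 < δ) {v : EuclideanSpace ℝ ι}
    (hv : ∀ e, v e = max 0 (∑ t ∈ Icc 1 T, H e (x t)))
    (hgap : ∑ t ∈ Icc 1 T, (F xs - F (x t)) ≤ B)
    (h : ∑ t ∈ Icc 1 T, 2 * ε * (augLagrangian F H (δ * ε) ((ε / (δ + 1)) • v) (x t) - F xs)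
      ≤ D + ‖(ε / (δ + 1)) • v‖ ^ 2 + T * (ε ^ 2 * K)) :
    ‖v‖ ^ 2 ≤ T * (δ + 1) * (D + K + 2 * ε * B) := by
  have hc : 0 ≤ ε / (δ + 1) := by positivity
  rw [← mul_sum, sum_sub_distrib, sum_augLagrangian, sum_const, Nat.card_Icc,
    add_tsub_cancel_right, norm_smul, Real.norm_of_nonneg hc] at h
  simp only [PiLp.smul_apply, smul_eq_mul, mul_assoc, ← mul_sum,
    sum_mul_eq_norm_sq_of_eq_max_zero hv, nsmul_eq_mul] at h
  rw [sum_sub_distrib, sum_const, Nat.card_Icc, add_tsub_cancel_right, nsmul_eq_mul] at hgap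
  set c := ε / (δ + 1)
  have hpenalty : 2 * (ε * (T * (δ * ε / 2 * (c * ‖v‖) ^ 2))) = δ * c ^ 2 * ‖v‖ ^ 2 := by
    linear_combination (δ * c ^ 2 * ‖v‖ ^ 2) * hTε
  have hK : T * (ε ^ 2 * K) = K := by linear_combination K * hTε
  have hgain : ε ^ 2 * ‖v‖ ^ 2 / (δ + 1) = 2 * ε * c * ‖v‖ ^ 2 - (δ + 1) * c ^ 2 * ‖v‖ ^ 2 := by
    simp only [c]; field_simp; ring
  have hscaled : ε ^ 2 * ‖v‖ ^ 2 / (δ + 1) ≤ D + K + 2 * ε * B := by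
    linarith [mul_le_mul_of_nonneg_left hgap (by positivity : (0 : ℝ) ≤ 2 * ε)]
  calc ‖v‖ ^ 2 = T * (δ + 1) * (ε ^ 2 * ‖v‖ ^ 2 / (δ + 1)) := by
        field_simp; linear_combination (-‖v‖ ^ 2) * hTε
    _ ≤ T * (δ + 1) * (D + K + 2 * ε * B) := by gcongr

theorem stmt11_general
    {n M : ℕ} (T : ℕ) (hT : 1 ≤ T)
    (X : Set (EuclideanSpace ℝ (Fin n))) (hXconv : Convex ℝ X)
    (P : EuclideanSpace ℝ (Fin n) → EuclideanSpace ℝ (Fin n))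
    (hP : ∀ y, P y ∈ X ∧ ∀ w ∈ X, ‖y - P y‖ ≤ ‖y - w‖)
    (F : EuclideanSpace ℝ (Fin n) → ℝ)
    (hFconv : ConvexOn ℝ Set.univ F) (hFdiff : Differentiable ℝ F)
    (Hc : Fin M → EuclideanSpace ℝ (Fin n) → ℝ)
    (hHconv : ∀ e, ConvexOn ℝ Set.univ (Hc e))
    (hHdiff : ∀ e, Differentiable ℝ (Hc e))
    (Hvec : EuclideanSpace ℝ (Fin n) → EuclideanSpace ℝ (Fin M))
    (hHvec : ∀ y e, Hvec y e = Hc e y)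
    (ε δ : ℝ) (hε : 0 < ε) (hδ : 0 < δ)
    (x : ℕ → EuclideanSpace ℝ (Fin n)) (lam : ℕ → EuclideanSpace ℝ (Fin M))
    (hx1 : x 1 ∈ X) (hlam1 : lam 1 = 0)
    (gx : ℕ → EuclideanSpace ℝ (Fin n))
    (hgx : ∀ t, gx t =
      gradient (fun y => F y + (∑ e, lam t e * Hc e y) - (δ * ε / 2) * ‖lam t‖ ^ 2) (x t))
    (glam : ℕ → EuclideanSpace ℝ (Fin M))
    (hglam : ∀ t, glam t = Hvec (x t) - (δ * ε) • lam t)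
    (hxrec : ∀ t, 1 ≤ t → t ≤ T → x (t + 1) = P (x t - ε • gx t))
    (hlamrec : ∀ t, 1 ≤ t → t ≤ T → ∀ e,
      lam (t + 1) e = max ((lam t + ε • glam t) e) 0)
    (C₁ C₂ : ℝ)
    (hgxb : ∀ t, 1 ≤ t → t ≤ T → ‖gx t‖ ^ 2 ≤ C₁ * (1 + ‖lam t‖ ^ 2))
    (hglamb : ∀ t, 1 ≤ t → t ≤ T → ‖glam t‖ ^ 2 ≤ C₂ + δ ^ 2 * ε ^ 2 * ‖lam t‖ ^ 2)
    (K : ℝ) (hK : K = C₁ + C₂) (hδK : C₁ + δ ^ 2 * ε ^ 2 ≤ δ)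
    (hεT : ε = 1 / Real.sqrt T)
    (xstar : EuclideanSpace ℝ (Fin n)) (hxstarX : xstar ∈ X)
    (hxstarfeas : ∀ e, Hc e xstar ≤ 0)
    (Lf : ℝ) (hLf : ∀ y z, |F y - F z| ≤ Lf * ‖y - z‖)
    (R : ℝ) (hR : ∀ y ∈ X, ‖y‖ ≤ R) :
    ∑ e, max 0 (∑ t ∈ Finset.Icc 1 T, Hc e (x t))
      ≤ Real.sqrt M *
        Real.sqrt (2 * Real.sqrt T * (δ + 1) *
          ((Real.sqrt T / 2) * (‖x 1 - xstar‖ ^ 2 + K) + 2 * T * Lf * R)) := by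
  set s := Real.sqrt T
  set v : EuclideanSpace ℝ (Fin M) := WithLp.toLp 2 fun e => max 0 (∑ t ∈ Icc 1 T, Hc e (x t))
  set W := 2 * s * (δ + 1) * ((s / 2) * (‖x 1 - xstar‖ ^ 2 + K) + 2 * T * Lf * R)
  suffices hvW : ‖v‖ ≤ Real.sqrt W from calc
    _ = ∑ e, v e := rfl
    _ ≤ Real.sqrt M * ‖v‖ := by simpa using sum_le_sqrt_card_mul_norm v
    _ ≤ Real.sqrt M * Real.sqrt W := by gcongr
  rcases lt_or_ge Lf 0 with hLf0 | hLf0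
  · have := subsingleton_of_abs_sub_le_mul_norm hLf0 hLf
    have hv0 : v = 0 := by
      ext e
      simpa [v] using sum_nonpos fun t _ => Subsingleton.elim (x t) xstar ▸ hxstarfeas e
    simp [hv0]
  have hsT : (T : ℝ) = s ^ 2 := (Real.sq_sqrt (Nat.cast_nonneg T)).symm
  have hTε : T * ε ^ 2 = 1 := by
    rw [hεT, hsT, div_pow, one_pow, mul_one_div_cancel (by positivity)]
  have hregret := sum_augLagrangian_sub_le hXconv hP hFconv hFdiff hHconv hHdiff hε.le hδ.le
    (K := K) (by simp [hlam1]) hgx (fun t e => by simp [hglam, hHvec]) hxrec hlamrec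
    (fun t ht1 htT => by nlinarith [hgxb t ht1 htT, hglamb t ht1 htT,
      mul_le_mul_of_nonneg_right hδK (sq_nonneg ‖lam t‖)])
    hxstarX hxstarfeas (ls := (ε / (δ + 1)) • v) (fun e => mul_nonneg (by positivity) (le_max_left _ _))
  have hxX : ∀ t, 1 ≤ t → t ≤ T + 1 → x t ∈ X :=
    forall_of_succ_of_one hx1 fun t ht htT => (hxrec t ht htT).symm ▸ (hP _).1
  have hgap := sum_sub_le_of_abs_sub_le_mul_norm hLf0 hLf (hR _ hxstarX)
    fun t ht => hR _ (hxX t (mem_Icc.1 ht).1 (by linarith [(mem_Icc.1 ht).2]))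
  rw [hlam1, zero_sub, norm_neg] at hregret
  rw [Nat.card_Icc, add_tsub_cancel_right] at hgap
  refine Real.le_sqrt_of_sq_le ((norm_sq_le_of_sum_augLagrangian_smul_le hε hTε hδ
    (fun e => rfl) hgap hregret).trans_eq ?_)
  simp only [W]
  rw [hεT, hsT]
  field_simp

/-- Part (b) of Theorem 1 of the paper: with constant step-size `ε = 1/√T`, `F`
`L_f`-Lipschitz and `X` bounded by `R`, the accumulated constraint violation satisfies
`∑ₑ [∑_{t=1}^T Hₑ(x_t)]₊ ≤ √M (2√T(δ+1)((√T/2)(‖x₁−x*‖²+K) + 2TL_fR))^{1/2}`,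
i.e. it grows as `O(T^{3/4})`. -/
theorem stmt11
    {n M : ℕ} (T : ℕ) (hT : 1 ≤ T)
    (X : Set (EuclideanSpace ℝ (Fin n))) (hXne : X.Nonempty)
    (hXcomp : IsCompact X) (hXconv : Convex ℝ X)
    (P : EuclideanSpace ℝ (Fin n) → EuclideanSpace ℝ (Fin n))
    (hP : ∀ y, P y ∈ X ∧ ∀ w ∈ X, ‖y - P y‖ ≤ ‖y - w‖)
    (F : EuclideanSpace ℝ (Fin n) → ℝ)
    (hFconv : ConvexOn ℝ Set.univ F) (hFdiff : Differentiable ℝ F)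
    (Hc : Fin M → EuclideanSpace ℝ (Fin n) → ℝ)
    (hHconv : ∀ e, ConvexOn ℝ Set.univ (Hc e))
    (hHdiff : ∀ e, Differentiable ℝ (Hc e))
    (Hvec : EuclideanSpace ℝ (Fin n) → EuclideanSpace ℝ (Fin M))
    (hHvec : ∀ y e, Hvec y e = Hc e y)
    (ε δ : ℝ) (hε : 0 < ε) (hδ : 0 < δ)
    (x : ℕ → EuclideanSpace ℝ (Fin n)) (lam : ℕ → EuclideanSpace ℝ (Fin M))
    (hx1 : x 1 ∈ X) (hlam1 : lam 1 = 0)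
    (gx : ℕ → EuclideanSpace ℝ (Fin n))
    (hgx : ∀ t, gx t =
      gradient (fun y => F y + (∑ e, lam t e * Hc e y) - (δ * ε / 2) * ‖lam t‖ ^ 2) (x t))
    (glam : ℕ → EuclideanSpace ℝ (Fin M))
    (hglam : ∀ t, glam t = Hvec (x t) - (δ * ε) • lam t)
    (hxrec : ∀ t, 1 ≤ t → t ≤ T → x (t + 1) = P (x t - ε • gx t))
    (hlamrec : ∀ t, 1 ≤ t → t ≤ T → ∀ e,
      lam (t + 1) e = max ((lam t + ε • glam t) e) 0)
    (C₁ C₂ : ℝ) (hC₁ : 0 ≤ C₁) (hC₂ : 0 ≤ C₂)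
    (hgxb : ∀ t, 1 ≤ t → t ≤ T → ‖gx t‖ ^ 2 ≤ C₁ * (1 + ‖lam t‖ ^ 2))
    (hglamb : ∀ t, 1 ≤ t → t ≤ T → ‖glam t‖ ^ 2 ≤ C₂ + δ ^ 2 * ε ^ 2 * ‖lam t‖ ^ 2)
    (K : ℝ) (hK : K = C₁ + C₂) (hδK : C₁ + δ ^ 2 * ε ^ 2 ≤ δ)
    (hεT : ε = 1 / Real.sqrt T)
    (xstar : EuclideanSpace ℝ (Fin n)) (hxstarX : xstar ∈ X)
    (hxstarfeas : ∀ e, Hc e xstar ≤ 0)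
    (hxstaropt : ∀ y ∈ X, (∀ e, Hc e y ≤ 0) → F xstar ≤ F y)
    (Lf : ℝ) (hLf : ∀ y z, |F y - F z| ≤ Lf * ‖y - z‖)
    (R : ℝ) (hR : ∀ y ∈ X, ‖y‖ ≤ R) :
    ∑ e, max 0 (∑ t ∈ Finset.Icc 1 T, Hc e (x t))
      ≤ Real.sqrt M *
        Real.sqrt (2 * Real.sqrt T * (δ + 1) *
          ((Real.sqrt T / 2) * (‖x 1 - xstar‖ ^ 2 + K) + 2 * T * Lf * R)) :=
  stmt11_general T hT X hXconv P hP F hFconv hFdiff Hc hHconv hHdiff Hvec hHvec ε δ hε hδ x lam hx1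
    hlam1 gx hgx glam hglam hxrec hlamrec C₁ C₂ hgxb hglamb K hK hδK hεT xstar hxstarX hxstarfeas Lf
    hLf R hR
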